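/- arXiv:1909.09387 — 3 statements merged into one kernel-verified Lean document; each statement's English description precedes it below -/
import Mathlib

section
/- Let H be an uncountable family of infinite, pairwise almost disjoint subsets of ω, let (A_n)_{n∈ω} be an antichain in a Boolean algebra A such that the supremum ⋁_{n∈H} A_n exists in A for every H ∈ H. Then for every sequence (μ_k)_{k∈ω} of finitely additive measures of finite variation on A, there exists H_0 ∈ H such that for every k ∈ ω, μ_k(⋁_{n∈H_0} A_n) = Σ_{n∈H_0} μ_k(A_n). -/
/-- A finitely additive complex-valued function on a Boolean algebra. -/
def FinAdd {α : Type*} [BooleanAlgebra α] (μ : α → ℂ) : Prop :=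
  ∀ a b : α, Disjoint a b → μ (a ⊔ b) = μ a + μ b

/-- The set of sums `∑_{a ∈ s} |μ a|` over finite pairwise-disjoint families `s`. -/
def PartitionSums {α : Type*} [BooleanAlgebra α] (μ : α → ℂ) : Set ℝ :=
  {x | ∃ s : Finset α, (∀ a ∈ s, ∀ b ∈ s, a ≠ b → Disjoint a b) ∧
    x = ∑ a ∈ s, ‖μ a‖}

/-- `v` is the (finite) variation norm `‖μ‖` of `μ`. -/
def HasVariation {α : Type*} [BooleanAlgebra α] (μ : α → ℂ) (v : ℝ) : Prop :=
  IsLUB (PartitionSums μ) v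

/-! For a fixed measure `μ` of variation `v` and `ε > 0`, only finitely many `H ∈ 𝓗` have
`‖μ (⋁_{n ∈ H} A n) - ∑_{n ∈ H} μ (A n)‖ > ε`. Given `N` of them, cut from each supremum `s_H`
a finite part `⋁_{n ∈ G_H} A n` so large that the remainder still has `‖μ‖ > ε`, with `G_H`
containing the finitely many points that `H` shares with the other `N - 1` sets. The remainders
`s_H \ ⋁_{n ∈ G_H} A n` are then pairwise disjoint, so `N ε ≤ v`. Thus for each `k` the equality
fails for only countably many `H`, and the uncountable family `𝓗` has a member where it holds
for every `k`. -/

open Set Filter Topology Function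

namespace FinAdd

variable {α : Type*} [BooleanAlgebra α] {μ : α → ℂ}

theorem map_bot (hμ : FinAdd μ) : μ ⊥ = 0 := by
  simpa using hμ ⊥ ⊥ disjoint_bot_left

theorem map_sdiff (hμ : FinAdd μ) {a b : α} (hba : b ≤ a) : μ (a \ b) = μ a - μ b := by
  rw [eq_sub_iff_add_eq, add_comm, ← hμ b (a \ b) disjoint_sdiff_self_right,
    sup_sdiff_cancel_right hba]

theorem map_finset_sup (hμ : FinAdd μ) {ι : Type*} (t : Finset ι) (f : ι → α)
    (hf : (t : Set ι).PairwiseDisjoint f) : μ (t.sup f) = ∑ i ∈ t, μ (f i) := by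
  classical
  induction t using Finset.induction_on with
  | empty => simpa using hμ.map_bot
  | insert i t hi ih =>
    rw [Finset.coe_insert, pairwiseDisjoint_insert] at hf
    rw [Finset.sup_insert, Finset.sum_insert hi, ← ih hf.1]
    exact hμ _ _ (Finset.disjoint_sup_right.2 fun j hj =>
      hf.2 j hj (ne_of_mem_of_not_mem hj hi).symm)

end FinAdd

section Variation

variable {α ι : Type*} [BooleanAlgebra α] {μ : α → ℂ} {v : ℝ}

theorem HasVariation.sum_norm_le (hv : HasVariation μ v) (hμ : FinAdd μ) (t : Finset ι)
    (f : ι → α) (hf : (t : Set ι).PairwiseDisjoint f) : ∑ i ∈ t, ‖μ (f i)‖ ≤ v := by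
  classical
  have hinj : InjOn f (t.filter (f · ≠ ⊥)) := fun i hi j hj hij =>
    hf.elim' (Finset.mem_filter.1 hi).1 (Finset.mem_filter.1 hj).1
      (by rw [hij, inf_idem]; exact (Finset.mem_filter.1 hj).2)
  calc ∑ i ∈ t, ‖μ (f i)‖ = ∑ i ∈ t.filter (f · ≠ ⊥), ‖μ (f i)‖ := by
        rw [Finset.sum_filter_of_ne]
        intro i _ hne hbot
        rw [hbot, hμ.map_bot, norm_zero] at hne
        exact hne rfl
    _ = ∑ a ∈ (t.filter (f · ≠ ⊥)).image f, ‖μ a‖ := by rw [Finset.sum_image hinj]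
    _ ≤ v := hv.1 ⟨_, ?_, rfl⟩
  simp only [Finset.mem_image]
  rintro _ ⟨i, hi, rfl⟩ _ ⟨j, hj, rfl⟩ hij
  exact hf (Finset.mem_filter.1 hi).1 (Finset.mem_filter.1 hj).1 (ne_of_apply_ne f hij)

theorem HasVariation.summable (hv : HasVariation μ v) (hμ : FinAdd μ) {A : ι → α}
    (hA : Pairwise (Disjoint on A)) (H : Set ι) : Summable fun i : H => μ (A i) := by
  refine Summable.of_norm (summable_of_sum_le (c := v) (fun _ => norm_nonneg _) fun u => ?_)
  simpa only [Finset.sum_map, Embedding.coe_subtype] using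
    hv.sum_norm_le hμ (u.map (Embedding.subtype _)) A (hA.set_pairwise _)

end Variation

section Antichain

variable {α ι : Type*} [BooleanAlgebra α] {A : ι → α} {H H' : Set ι} {s s' t : α}

theorem IsLUB.le_compl_of_notMem (hA : Pairwise (Disjoint on A)) (hs : IsLUB (A '' H) s) {i : ι}
    (hi : i ∉ H) : s ≤ (A i)ᶜ :=
  hs.2 <| forall_mem_image.2 fun _ hj =>
    le_compl_iff_disjoint_left.2 (hA (ne_of_mem_of_not_mem hj hi).symm)

theorem IsLUB.disjoint_sdiff (hA : Pairwise (Disjoint on A)) (hs : IsLUB (A '' H) s)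
    (hs' : IsLUB (A '' H') s') (ht : ∀ i ∈ H ∩ H', A i ≤ t) : Disjoint (s \ t) s' := by
  rw [← le_compl_iff_disjoint_left, _root_.compl_sdiff, himp_eq]
  refine hs'.2 (forall_mem_image.2 fun i hi' => ?_)
  by_cases hi : i ∈ H
  · exact le_sup_of_le_left (ht i ⟨hi, hi'⟩)
  · exact le_sup_of_le_right (le_compl_comm.1 (hs.le_compl_of_notMem hA hi))

end Antichain

section Defect

variable {α ι : Type*} [BooleanAlgebra α] {μ : α → ℂ} {v : ℝ} {A : ι → α}

theorem exists_finset_lt_norm_map_sdiff_sup (hμ : FinAdd μ) (hv : HasVariation μ v)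
    (hA : Pairwise (Disjoint on A)) {H : Set ι} {s : α} (hs : IsLUB (A '' H) s) {ε : ℝ}
    (hε : ε < ‖μ s - ∑' i : H, μ (A i)‖) (F : Finset ι) :
    ∃ G : Finset ι, ↑G ⊆ H ∧ (∀ i ∈ F, i ∈ H → i ∈ G) ∧ ε < ‖μ (s \ G.sup A)‖ := by
  classical
  have hsdiff : ∀ u : Finset H,
      μ (s \ (u.map (Embedding.subtype _)).sup A) = μ s - ∑ i ∈ u, μ (A i) := fun u => by
    rw [hμ.map_sdiff (Finset.sup_le ?_), hμ.map_finset_sup _ _ (hA.set_pairwise _),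
      Finset.sum_map, Embedding.coe_subtype]
    simp only [Finset.mem_map, Embedding.coe_subtype]
    rintro _ ⟨i, -, rfl⟩
    exact hs.1 (mem_image_of_mem A i.2)
  have hlim : Tendsto (fun u : Finset H => ‖μ (s \ (u.map (Embedding.subtype _)).sup A)‖) atTop
      (𝓝 ‖μ s - ∑' i : H, μ (A i)‖) := by
    simp_rw [hsdiff]
    exact (tendsto_const_nhds.sub (hv.summable hμ hA H).hasSum).norm
  obtain ⟨u, hFu, hu⟩ :=
    ((eventually_ge_atTop (F.subtype (· ∈ H))).and (hlim.eventually (lt_mem_nhds hε))).exists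
  refine ⟨u.map (Embedding.subtype _), ?_, fun i hi hiH => ?_, hu⟩
  · simp only [Finset.coe_map, Embedding.coe_subtype, image_subset_iff]
    exact fun i _ => i.2
  · exact Finset.mem_map_of_mem _ (hFu ((Finset.mem_subtype (a := ⟨i, hiH⟩)).2 hi))

theorem card_mul_le_of_lt_norm_sub_tsum (hμ : FinAdd μ) (hv : HasVariation μ v)
    (hA : Pairwise (Disjoint on A)) {T : Finset (Set ι)}
    (had : (T : Set (Set ι)).Pairwise fun H H' => (H ∩ H').Finite) (s : Set ι → α)
    (hs : ∀ H ∈ T, IsLUB (A '' H) (s H)) {ε : ℝ}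
    (hε : ∀ H ∈ T, ε < ‖μ (s H) - ∑' i : H, μ (A i)‖) :
    T.card * ε ≤ v := by
  classical
  have hF : (⋃ H ∈ T, ⋃ H' ∈ T, ⋃ (_ : H ≠ H'), H ∩ H').Finite :=
    T.finite_toSet.biUnion fun H hH => T.finite_toSet.biUnion fun H' hH' =>
      finite_iUnion fun hne => had hH hH' hne
  choose! G hGH hFG hG using fun H (hH : H ∈ T) =>
    exists_finset_lt_norm_map_sdiff_sup hμ hv hA (hs H hH) (hε H hH) hF.toFinset
  have hdisj : (T : Set (Set ι)).PairwiseDisjoint fun H => s H \ (G H).sup A := by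
    intro H hH H' hH' hne
    refine ((hs H hH).disjoint_sdiff hA (hs H' hH') fun i hi => ?_).mono_right sdiff_le
    refine Finset.le_sup (hFG H hH i ?_ hi.1)
    simp only [Finite.mem_toFinset, mem_iUnion]
    exact ⟨H, hH, H', hH', hne, hi⟩
  calc T.card * ε = T.card • ε := (nsmul_eq_mul _ _).symm
    _ ≤ ∑ H ∈ T, ‖μ (s H \ (G H).sup A)‖ := T.card_nsmul_le_sum _ _ fun H hH => (hG H hH).le
    _ ≤ v := hv.sum_norm_le hμ T _ hdisj

theorem finite_setOf_lt_norm_sub_tsum (hμ : FinAdd μ) (hv : HasVariation μ v)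
    (hA : Pairwise (Disjoint on A)) {𝓗 : Set (Set ι)}
    (had : 𝓗.Pairwise fun H H' => (H ∩ H').Finite) (s : Set ι → α)
    (hs : ∀ H ∈ 𝓗, IsLUB (A '' H) (s H)) {ε : ℝ} (hε : 0 < ε) :
    {H ∈ 𝓗 | ε < ‖μ (s H) - ∑' i : H, μ (A i)‖}.Finite := by
  by_contra hinf
  obtain ⟨N, hN⟩ := exists_nat_gt (v / ε)
  obtain ⟨T, hT, rfl⟩ := Set.Infinite.exists_subset_card_eq hinf N
  have hle := card_mul_le_of_lt_norm_sub_tsum hμ hv hA (had.mono fun H hH => (hT hH).1) s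
    (fun H hH => hs H (hT hH).1) fun H hH => (hT hH).2
  rw [div_lt_iff₀ hε] at hN
  linarith

theorem countable_setOf_ne_tsum (hμ : FinAdd μ) (hv : HasVariation μ v)
    (hA : Pairwise (Disjoint on A)) {𝓗 : Set (Set ι)}
    (had : 𝓗.Pairwise fun H H' => (H ∩ H').Finite) (s : Set ι → α)
    (hs : ∀ H ∈ 𝓗, IsLUB (A '' H) (s H)) :
    {H ∈ 𝓗 | μ (s H) ≠ ∑' i : H, μ (A i)}.Countable := by
  refine (countable_iUnion fun m : ℕ => (finite_setOf_lt_norm_sub_tsum hμ hv hA had s hs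
    (ε := 1 / (m + 1)) (by positivity)).countable).mono ?_
  rintro H ⟨hH, hne⟩
  obtain ⟨m, hm⟩ := exists_nat_one_div_lt (norm_pos_iff.2 (sub_ne_zero.2 hne))
  exact mem_iUnion.2 ⟨m, hH, hm⟩

end Defect

theorem stmt3_general {α : Type*} [BooleanAlgebra α]
    (𝓗 : Set (Set ℕ)) (hunc : ¬𝓗.Countable)
    (had : ∀ H₁ ∈ 𝓗, ∀ H₂ ∈ 𝓗, H₁ ≠ H₂ → (H₁ ∩ H₂).Finite)
    (A : ℕ → α) (hA : ∀ n m, n ≠ m → Disjoint (A n) (A m))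
    (hsup : ∀ H ∈ 𝓗, ∃ s : α, IsLUB (A '' H) s)
    (μ : ℕ → α → ℂ) (hadd : ∀ k, FinAdd (μ k))
    (hvar : ∀ k, ∃ v : ℝ, HasVariation (μ k) v) :
    ∃ H₀ ∈ 𝓗, ∀ k : ℕ, ∀ s : α, IsLUB (A '' H₀) s →
      μ k s = ∑' n : H₀, μ k (A n) := by
  choose! s hs using hsup
  choose v hv using hvar
  have hbad : (⋃ k, {H ∈ 𝓗 | μ k (s H) ≠ ∑' n : H, μ k (A n)}).Countable :=
    countable_iUnion fun k => countable_setOf_ne_tsum (hadd k) (hv k) hA had s hs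
  obtain ⟨H₀, hH₀, hgood⟩ := not_subset.1 fun h => hunc (hbad.mono h)
  refine ⟨H₀, hH₀, fun k t ht => ?_⟩
  rw [ht.unique (hs H₀ hH₀)]
  by_contra hne
  exact hgood (mem_iUnion.2 ⟨k, hH₀, hne⟩)

/-- Given an uncountable almost disjoint family `𝓗` of infinite subsets of `ω`, an
antichain `(A_n)` in a Boolean algebra whose suprema along members of `𝓗` exist,
and a sequence `(μ_k)` of finitely additive measures of finite variation, there is
`H₀ ∈ 𝓗` with `μ_k(⋁_{n ∈ H₀} A_n) = ∑_{n ∈ H₀} μ_k(A_n)` for every `k`. -/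
theorem stmt3 {α : Type*} [BooleanAlgebra α]
    (𝓗 : Set (Set ℕ)) (hunc : ¬𝓗.Countable)
    (hinf : ∀ H ∈ 𝓗, H.Infinite)
    (had : ∀ H₁ ∈ 𝓗, ∀ H₂ ∈ 𝓗, H₁ ≠ H₂ → (H₁ ∩ H₂).Finite)
    (A : ℕ → α) (hA : ∀ n m, n ≠ m → Disjoint (A n) (A m))
    (hsup : ∀ H ∈ 𝓗, ∃ s : α, IsLUB (A '' H) s)
    (μ : ℕ → α → ℂ) (hadd : ∀ k, FinAdd (μ k))
    (hvar : ∀ k, ∃ v : ℝ, HasVariation (μ k) v) :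
    ∃ H₀ ∈ 𝓗, ∀ k : ℕ, ∀ s : α, IsLUB (A '' H₀) s →
      μ k s = ∑' n : H₀, μ k (A n) :=
  stmt3_general 𝓗 hunc had A hA hsup μ hadd hvar
end

section
/- Let (C_n)_{n∈ω} be a partition of ω into infinite sets. Then for every infinite I ⊆ ω, the set S_n = {σ ∈ Sym(ω) : σ[C_n] ∩ I is finite} is a meager subset of Sym(ω) (with its Polish group topology as a subspace of ω^ω) for each n ∈ ω. -/
/-!
If `σ[C] ∩ I` is finite, it lies in some finite `K ⊆ ω`, so the set in question is a countable
union of the sets `{σ | σ[C] ∩ I ⊆ K}`. Each of them is closed, and has empty interior: a basic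
neighbourhood of `σ` only fixes `σ` on a finite set `F`, and composing `σ` with a transposition
sends a point of `C \ F` into `I \ K` without changing `σ` on `F`.
-/

open Topology Filter Set Function

lemma exists_finite_eqOn_subset_of_mem_nhds {ι β : Type*} [TopologicalSpace β]
    [DiscreteTopology β] {f : ι → β} {s : Set (ι → β)} (hs : s ∈ 𝓝 f) :
    ∃ F : Set ι, F.Finite ∧ {g | EqOn g f F} ⊆ s := by
  rw [nhds_pi, Filter.mem_pi] at hs
  obtain ⟨F, hF, t, ht, hts⟩ := hs
  refine ⟨F, hF, fun g hg => hts fun i hi => ?_⟩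
  rw [show g i = f i from hg hi]
  exact mem_of_mem_nhds (ht i)

lemma Function.Bijective.exists_bijective_eqOn_apply_eq {α β : Type*} {σ : α → β}
    (hσ : Bijective σ) {F : Set α} {x : α} {y : β} (hx : x ∉ F) (hy : y ∉ σ '' F) :
    ∃ τ : α → β, Bijective τ ∧ EqOn τ σ F ∧ τ x = y := by
  classical
  refine ⟨Equiv.swap (σ x) y ∘ σ, (Equiv.swap _ _).bijective.comp hσ, fun i hi => ?_, by simp⟩
  have hix : σ i ≠ σ x := fun h => hx (hσ.1 h ▸ hi)
  have hiy : σ i ≠ y := fun h => hy ⟨i, hi, h⟩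
  exact Equiv.swap_apply_of_ne_of_ne hix hiy

section Bijections

variable {α β : Type*} [TopologicalSpace β] [DiscreteTopology β]

lemma isClosed_setOf_image_inter_subset (A : Set α) (I K : Set β) :
    IsClosed {σ : {f : α → β // Bijective f} | σ.1 '' A ∩ I ⊆ K} := by
  have : {σ : {f : α → β // Bijective f} | σ.1 '' A ∩ I ⊆ K} =
      ⋂ x ∈ A, (fun σ : {f : α → β // Bijective f} => σ.1 x) ⁻¹' (Iᶜ ∪ K) := by
    ext σ
    simp only [mem_ofPred_eq, subset_def, mem_inter_iff, mem_image, mem_iInter, mem_preimage,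
      mem_union, mem_compl_iff]
    grind
  rw [this]
  exact isClosed_biInter fun x _ =>
    (isClosed_discrete _).preimage ((continuous_apply x).comp continuous_subtype_val)

lemma interior_setOf_image_inter_subset_eq_empty {A : Set α} {I K : Set β}
    (hA : A.Infinite) (hIK : (I \ K).Infinite) :
    interior {σ : {f : α → β // Bijective f} | σ.1 '' A ∩ I ⊆ K} = ∅ := by
  refine eq_empty_iff_forall_notMem.2 fun σ hσ => ?_
  rw [mem_interior_iff_mem_nhds, nhds_induced, mem_comap] at hσ
  obtain ⟨V, hV, hVsub⟩ := hσ
  obtain ⟨F, hF, hFV⟩ := exists_finite_eqOn_subset_of_mem_nhds hV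
  obtain ⟨x, hxA, hxF⟩ := (hA.sdiff hF).nonempty
  obtain ⟨y, ⟨hyI, hyK⟩, hyF⟩ := (hIK.sdiff (hF.image σ.1)).nonempty
  obtain ⟨τ, hτ, hτσ, hτx⟩ := σ.2.exists_bijective_eqOn_apply_eq hxF hyF
  have hτK : τ '' A ∩ I ⊆ K := @hVsub ⟨τ, hτ⟩ (hFV hτσ)
  exact hyK (hτK ⟨⟨x, hxA, hτx⟩, hyI⟩)

lemma isMeagre_setOf_finite_image_inter [Countable β] {A : Set α} {I : Set β}
    (hA : A.Infinite) (hI : I.Infinite) :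
    IsMeagre {σ : {f : α → β // Bijective f} | (σ.1 '' A ∩ I).Finite} := by
  have hcover : {σ : {f : α → β // Bijective f} | (σ.1 '' A ∩ I).Finite} ⊆
      ⋃ K : Finset β, {σ | σ.1 '' A ∩ I ⊆ K} := fun σ hσ =>
    mem_iUnion.2 ⟨hσ.toFinset, hσ.coe_toFinset.symm.subset⟩
  refine (isMeagre_iUnion fun K => IsNowhereDense.isMeagre ?_).mono hcover
  rw [(isClosed_setOf_image_inter_subset A I K).isNowhereDense_iff]
  exact interior_setOf_image_inter_subset_eq_empty hA (hI.sdiff K.finite_toSet)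

end Bijections

theorem stmt5_general (C : ℕ → Set ℕ)
    (hCinf : ∀ n, (C n).Infinite)
    (I : Set ℕ) (hI : I.Infinite) (n : ℕ) :
    IsMeagre {σ : {f : ℕ → ℕ // Function.Bijective f} | (σ.1 '' C n ∩ I).Finite} :=
  isMeagre_setOf_finite_image_inter (hCinf n) hI

/-- Let `(C_n)` be a partition of `ω` into infinite sets. For every infinite
`I ⊆ ω` and every `n`, the set `S_n = {σ ∈ Sym(ω) : σ[C_n] ∩ I is finite}` is a
meager subset of the symmetric group `Sym(ω)` (topologized as a subspace of the
Baire space `ω^ω`). -/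
theorem stmt5 (C : ℕ → Set ℕ)
    (hCinf : ∀ n, (C n).Infinite)
    (hCdisj : ∀ n m, n ≠ m → Disjoint (C n) (C m))
    (hCcov : (⋃ n, C n) = Set.univ)
    (I : Set ℕ) (hI : I.Infinite) (n : ℕ) :
    IsMeagre {σ : {f : ℕ → ℕ // Function.Bijective f} | (σ.1 '' C n ∩ I).Finite} :=
  stmt5_general C hCinf I hI n
end

section
/- Let A be a Boolean algebra, ε > 0, μ a complex finitely additive measure on A, (A_k)_{k≥1} elements of A, n ≥ 1, and define C_k = A_k \ ⋁_{0<i<k} A_i (i.e., C_k = A_k ∧ ¬(A_1 ∨ ... ∨ A_{k−1})). Suppose: (a) the supremum ⋁_{k∈H_0} C_k exists in A for an infinite set H_0 ∋ n; (b) μ(⋁_{k∈H_0} C_k) = Σ_{k∈H_0} μ(C_k); (c) |μ(A_n)| > 2ε; (d) |μ|(A_k) < ε/2^{k+2} for all k ≥ 1 with k ≠ n. Then |μ(⋁_{k∈H_0} C_k)| > ε. -/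
/-!
Removing the earlier `A_i` from `A_n` costs at most `|μ|(⋁_{0<i<n} A_i) ≤ ∑_{i<n} ε/2^{i+2} ≤ ε/2`,
so `|μ(C_n)| > 3ε/2`. All other terms of `μ(s) = ∑_{k ∈ H₀} μ(C_k)` satisfy
`|μ(C_k)| ≤ |μ|(A_k) < ε/2^{k+2}` and together contribute at most `ε/2`, whence `|μ(s)| > ε`.
-/

section Variation

variable {α : Type*} [GeneralizedBooleanAlgebra α] {ν : α → ℝ}

theorem apply_bot_eq_zero_of_additive (hν : ∀ a b : α, Disjoint a b → ν (a ⊔ b) = ν a + ν b) :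
    ν ⊥ = 0 := by
  have h := hν ⊥ ⊥ disjoint_bot_left
  rw [sup_idem] at h
  linarith

theorem apply_sup_le_add_of_additive (hν : ∀ a b : α, Disjoint a b → ν (a ⊔ b) = ν a + ν b)
    (hmono : Monotone ν) (a b : α) : ν (a ⊔ b) ≤ ν a + ν b := by
  rw [← sup_sdiff_self_right a b, hν a (b \ a) disjoint_sdiff_self_right]
  exact add_le_add_right (hmono sdiff_le) _

theorem apply_finset_sup_le_sum_of_additive
    (hν : ∀ a b : α, Disjoint a b → ν (a ⊔ b) = ν a + ν b) (hmono : Monotone ν)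
    {ι : Type*} (F : Finset ι) (A : ι → α) : ν (F.sup A) ≤ ∑ i ∈ F, ν (A i) := by
  classical
  induction F using Finset.induction with
  | empty => simp [apply_bot_eq_zero_of_additive hν]
  | insert i F hi ih =>
    rw [Finset.sup_insert, Finset.sum_insert hi]
    exact (apply_sup_le_add_of_additive hν hmono _ _).trans (add_le_add_right ih _)

end Variation

theorem norm_le_norm_sdiff_add_of_finAdd {α : Type*} [BooleanAlgebra α] {μ : α → ℂ}
    {ν : α → ℝ} (hμ : FinAdd μ) (hdom : ∀ a, ‖μ a‖ ≤ ν a) (hmono : Monotone ν) (a b : α) :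
    ‖μ a‖ ≤ ‖μ (a \ b)‖ + ν b := by
  have hdisj : Disjoint (a ⊓ b) (a \ b) := disjoint_inf_sdiff
  have hsplit : μ a = μ (a ⊓ b) + μ (a \ b) := by rw [← hμ _ _ hdisj, sup_inf_sdiff]
  calc ‖μ a‖ ≤ ‖μ (a ⊓ b)‖ + ‖μ (a \ b)‖ := hsplit ▸ norm_add_le _ _
    _ ≤ ν b + ‖μ (a \ b)‖ := by gcongr; exact (hdom _).trans (hmono inf_le_right)
    _ = ‖μ (a \ b)‖ + ν b := add_comm _ _

theorem norm_tsum_sub_le_tsum {ι E : Type*} [NormedAddCommGroup E] {f : ι → E} {g : ι → ℝ}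
    (hf : Summable f) (hg : Summable g) (i : ι) (hgi : 0 ≤ g i)
    (hfg : ∀ j, j ≠ i → ‖f j‖ ≤ g j) : ‖∑' j, f j - f i‖ ≤ ∑' j, g j := by
  classical
  rw [hf.tsum_eq_add_tsum_ite i, add_sub_cancel_left]
  refine tsum_of_norm_bounded hg.hasSum fun j => ?_
  split_ifs with hj
  · simpa [hj] using hgi
  · exact hfg j hj

theorem hasSum_div_two_pow_add_two (ε : ℝ) : HasSum (fun k : ℕ => ε / 2 ^ (k + 2)) (ε / 2) := by
  convert hasSum_geometric_two' (ε / 2) using 2 with k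
  rw [pow_add]
  ring

theorem stmt14_general {α : Type*} [BooleanAlgebra α] (ε : ℝ) (hε : 0 < ε)
    (μ : α → ℂ) (ν : α → ℝ)
    (hadd : FinAdd μ)
    (hdom : ∀ a : α, ‖μ a‖ ≤ ν a)
    (hνadd : ∀ a b : α, Disjoint a b → ν (a ⊔ b) = ν a + ν b)
    (hνmono : ∀ a b : α, a ≤ b → ν a ≤ ν b)
    (A : ℕ → α) (n : ℕ)
    (C : ℕ → α) (hC : ∀ k, C k = A k \ (Finset.Ioo 0 k).sup A)
    (H₀ : Set ℕ) (hnH : n ∈ H₀) (h0 : 0 ∉ H₀)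
    (s : α)
    (hsum : Summable (fun k : H₀ => μ (C k)))
    (heq : μ s = ∑' k : H₀, μ (C k))
    (hAn : 2 * ε < ‖μ (A n)‖)
    (hsmall : ∀ k, 1 ≤ k → k ≠ n → ν (A k) < ε / 2^(k+2)) :
    ε < ‖μ s‖ := by
  have hmono : Monotone ν := fun a b hab => hνmono a b hab
  have hgeom := hasSum_div_two_pow_add_two ε
  have hg0 : ∀ k : ℕ, 0 ≤ ε / 2 ^ (k + 2) := fun k => by positivity
  have hearlier : ν ((Finset.Ioo 0 n).sup A) ≤ ε / 2 :=
    calc ν ((Finset.Ioo 0 n).sup A) ≤ ∑ i ∈ Finset.Ioo 0 n, ν (A i) :=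
          apply_finset_sup_le_sum_of_additive hνadd hmono _ _
      _ ≤ ∑ i ∈ Finset.Ioo 0 n, ε / 2 ^ (i + 2) := Finset.sum_le_sum fun i hi =>
          (hsmall i (Finset.mem_Ioo.1 hi).1 (Finset.mem_Ioo.1 hi).2.ne).le
      _ ≤ ε / 2 := hgeom.tsum_eq ▸ hgeom.summable.sum_le_tsum _ fun k _ => hg0 k
  have hCn : ‖μ (A n)‖ ≤ ‖μ (C n)‖ + ε / 2 := by
    rw [hC n]
    linarith [norm_le_norm_sdiff_add_of_finAdd hadd hdom hmono (A n) ((Finset.Ioo 0 n).sup A)]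
  have hlater : ∀ k : H₀, k ≠ ⟨n, hnH⟩ → ‖μ (C k)‖ ≤ ε / 2 ^ ((k : ℕ) + 2) := fun k hk =>
    calc ‖μ (C k)‖ ≤ ν (A k) := (hdom _).trans (hmono (hC k ▸ sdiff_le))
      _ ≤ ε / 2 ^ ((k : ℕ) + 2) := (hsmall k (Nat.one_le_iff_ne_zero.2 fun h => h0 (h ▸ k.2))
          fun h => hk (Subtype.ext h)).le
  have htail : ‖μ s - μ (C n)‖ ≤ ε / 2 :=
    calc ‖μ s - μ (C n)‖ ≤ ∑' k : H₀, ε / 2 ^ ((k : ℕ) + 2) := heq ▸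
          norm_tsum_sub_le_tsum hsum (hgeom.summable.subtype H₀) ⟨n, hnH⟩ (hg0 n) hlater
      _ ≤ ε / 2 := hgeom.tsum_eq ▸ hgeom.summable.tsum_subtype_le _ H₀ hg0
  linarith [norm_le_norm_add_norm_sub' (μ (C n)) (μ s), norm_sub_rev (μ s) (μ (C n))]

/-- The estimate in Case (G) of the main theorem: with `μ` finitely additive,
`ν = |μ|` its variation (nonnegative, finitely additive, monotone, dominating
`|μ(·)|`), `C_k = A_k \ ⋁_{0<i<k} A_i`, an infinite `H₀ ∋ n` (`0 ∉ H₀`, `n ≥ 1`)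
with `s = ⋁_{k ∈ H₀} C_k` satisfying `μ(s) = ∑_{k ∈ H₀} μ(C_k)`, if
`|μ(A_n)| > 2ε` and `|μ|(A_k) < ε/2^{k+2}` for all `k ≥ 1`, `k ≠ n`, then
`|μ(s)| > ε`. -/
theorem stmt14 {α : Type*} [BooleanAlgebra α] (ε : ℝ) (hε : 0 < ε)
    (μ : α → ℂ) (ν : α → ℝ)
    (hadd : FinAdd μ)
    (hdom : ∀ a : α, ‖μ a‖ ≤ ν a)
    (hnn : ∀ a : α, 0 ≤ ν a)
    (hνadd : ∀ a b : α, Disjoint a b → ν (a ⊔ b) = ν a + ν b)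
    (hνmono : ∀ a b : α, a ≤ b → ν a ≤ ν b)
    (A : ℕ → α) (n : ℕ) (hn : 1 ≤ n)
    (C : ℕ → α) (hC : ∀ k, C k = A k \ (Finset.Ioo 0 k).sup A)
    (H₀ : Set ℕ) (hH₀ : H₀.Infinite) (hnH : n ∈ H₀) (h0 : 0 ∉ H₀)
    (s : α) (hlub : IsLUB (C '' H₀) s)
    (hsum : Summable (fun k : H₀ => μ (C k)))
    (heq : μ s = ∑' k : H₀, μ (C k))
    (hAn : 2 * ε < ‖μ (A n)‖)
    (hsmall : ∀ k, 1 ≤ k → k ≠ n → ν (A k) < ε / 2^(k+2)) :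
    ε < ‖μ s‖ :=
  stmt14_general ε hε μ ν hadd hdom hνadd hνmono A n C hC H₀ hnH h0 s hsum heq hAn hsmall
end
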